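/- arXiv:2310.17878 — 2 statements merged into one kernel-verified Lean document; each statement's English description precedes it below -/
import Mathlib

section
/- Let k ≥ 2 be an integer, φ ∈ (0,1), ε ∈ (0,1). Let G = (V,E) be a d-regular graph that admits a (k,φ,ε)-clustering C_1,…,C_k. Then for all i ∈ [k], the cluster center μ_i satisfies | ‖μ_i‖₂² − 1/|C_i| | ≤ (4√ε/φ)·(1/|C_i|). -/
open Finset Matrix Real
open scoped RealInnerProductSpace

/-- Number of edges between `S` and `T`, counted as ordered adjacent pairs
(for disjoint `S`, `T` this is exactly the number of edges of `G` with one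
endpoint in `S` and the other in `T`). -/
def edgesBetween {n : ℕ} (G : SimpleGraph (Fin n)) [DecidableRel G.Adj]
    (S T : Finset (Fin n)) : ℕ :=
  ((S ×ˢ T).filter fun p => G.Adj p.1 p.2).card

/-- Outer conductance `φ_out(C, V) = |E(C, V∖C)| / (d·|C|)`. -/
noncomputable def phiOut {n : ℕ} (G : SimpleGraph (Fin n)) [DecidableRel G.Adj]
    (d : ℕ) (C : Finset (Fin n)) : ℝ :=
  (edgesBetween G C Cᶜ : ℝ) / (d * C.card)

/-- Inner conductance: the minimum over `S ⊆ C`, `0 < |S| ≤ |C|/2`, of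
`|E(S, C∖S)| / (d·|S|)`, when `|C| > 1`, and `1` otherwise. -/
noncomputable def phiIn {n : ℕ} (G : SimpleGraph (Fin n)) [DecidableRel G.Adj]
    (d : ℕ) (C : Finset (Fin n)) : ℝ :=
  if 1 < C.card then
    sInf {r : ℝ | ∃ S, S ⊆ C ∧ 0 < S.card ∧ 2 * S.card ≤ C.card ∧
      r = (edgesBetween G S (C \ S) : ℝ) / (d * S.card)}
  else 1

/-- `C` is a `(k, φ, ε)`-clustering of `G` (with conductances computed with
denominator `d`): a partition of the vertex set into `C 1, …, C k` with
`φ_in(C i) ≥ φ` and `φ_out(C i, V) ≤ ε` for all `i`. -/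
def IsClustering {n : ℕ} (G : SimpleGraph (Fin n)) [DecidableRel G.Adj]
    (d k : ℕ) (φ ε : ℝ) (C : Fin k → Finset (Fin n)) : Prop :=
  (∀ i j, i ≠ j → Disjoint (C i) (C j)) ∧
  (∀ x, ∃ i, x ∈ C i) ∧
  (∀ i, φ ≤ phiIn G d (C i)) ∧
  (∀ i, phiOut G d (C i) ≤ ε)

/-- The normalized Laplacian `L = I - A/d`. -/
noncomputable def normLap {n : ℕ} (G : SimpleGraph (Fin n)) [DecidableRel G.Adj]
    (d : ℕ) : Matrix (Fin n) (Fin n) ℝ :=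
  1 - (d : ℝ)⁻¹ • G.adjMatrix ℝ

/-- `u` is an orthonormal basis of eigenvectors of the normalized Laplacian of `G`,
ordered by nondecreasing eigenvalues `lam`. -/
def IsSpectralBasis {n : ℕ} (G : SimpleGraph (Fin n)) [DecidableRel G.Adj] (d : ℕ)
    (u : Fin n → Fin n → ℝ) (lam : Fin n → ℝ) : Prop :=
  (∀ i j, ∑ x, u i x * u j x = if i = j then 1 else 0) ∧
  (∀ i, normLap G d *ᵥ u i = lam i • u i) ∧
  Monotone lam

/-- The spectral embedding `f_x ∈ ℝ^k`, `f_x(i) = u_i(x)`. -/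
noncomputable def spectralEmbedding {n : ℕ} (u : Fin n → Fin n → ℝ) {k : ℕ}
    (hkn : k ≤ n) (x : Fin n) : EuclideanSpace ℝ (Fin k) :=
  (WithLp.equiv 2 (Fin k → ℝ)).symm fun i => u (Fin.castLE hkn i) x

/-- The center `μ = (1/|C|) ∑_{x ∈ C} f_x` of a cluster `C`. -/
noncomputable def center {n k : ℕ} (f : Fin n → EuclideanSpace ℝ (Fin k))
    (C : Finset (Fin n)) : EuclideanSpace ℝ (Fin k) :=
  ((C.card : ℝ)⁻¹) • ∑ x ∈ C, f x

/-!
Inside a cluster `C` the inner conductance gives a Cheeger-type bound: a vector summing to zero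
on `C` has Dirichlet energy on `G[C]` at least `φ² d ‖v‖²` (split at a median, apply the co-area
inequality to the squares of both parts, then Cauchy–Schwarz). Summing over the clusters, every
vector orthogonal to the `k` cluster indicators has `vᵀ L v ≥ (φ²/2) ‖v‖²`, so `λ_{k+1} ≥ φ²/2`
by the easy half of Courant–Fischer.

Expand the indicator `χ` of a cluster `C` in the eigenbasis: `‖χ‖² = |C|` and
`χᵀ L χ = |E(C, V ∖ C)| / d ≤ ε |C|`, so the mass `T` of `χ` on the eigenvectors beyond the first
`k` satisfies `(φ²/2) T ≤ ε |C|`, and `T ≤ |C|`. The first `k` coordinates of `χ` are `|C| μ`,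
hence `|C|² ‖μ‖² = |C| - T` and `|‖μ‖² - 1/|C|| = T / |C|² ≤ min (1, 2ε/φ²) / |C|`,
which is at most `(4√ε/φ) / |C|`.
-/

lemma posPart_sq_add_negPart_sq (a : ℝ) : a⁺ ^ 2 + a⁻ ^ 2 = a ^ 2 := by
  rcases le_total a 0 with ha | ha <;> simp [ha]

lemma sq_posPart_sub_add_sq_negPart_sub_le (a b : ℝ) :
    (a⁺ - b⁺) ^ 2 + (a⁻ - b⁻) ^ 2 ≤ (a - b) ^ 2 := by
  rcases le_total a 0 with ha | ha <;> rcases le_total b 0 with hb | hb <;>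
    simp only [posPart_eq_zero.2, negPart_eq_neg.2, posPart_eq_self.2, negPart_eq_zero.2, ha,
      hb] <;>
    nlinarith

lemma Finset.exists_median {V : Type*} (C : Finset V) (v : V → ℝ) :
    ∃ c, 2 * #{x ∈ C | c < v x} ≤ #C ∧ 2 * #{x ∈ C | v x < c} ≤ #C := by
  classical
  rcases C.eq_empty_or_nonempty with rfl | hC
  · exact ⟨0, by simp⟩
  set T := {y ∈ C | #C ≤ 2 * #{x ∈ C | v x ≤ v y}}
  have hT : T.Nonempty := by
    obtain ⟨y, hy, hmax⟩ := C.exists_max_image v hC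
    refine ⟨y, mem_filter.2 ⟨hy, ?_⟩⟩
    rw [filter_true_of_mem hmax]; omega
  obtain ⟨y, hy, hmin⟩ := T.exists_min_image v hT
  refine ⟨v y, ?_, ?_⟩
  · have := C.card_filter_add_card_filter_not (fun x => v x ≤ v y)
    simp only [not_le] at this
    have := (mem_filter.1 hy).2
    omega
  · by_contra! hlt
    obtain ⟨z, hz, hzmax⟩ := exists_max_image {x ∈ C | v x < v y} v
      (card_pos.1 (by omega))
    have hsub : {x ∈ C | v x < v y} ⊆ {x ∈ C | v x ≤ v z} :=
      fun x hx => mem_filter.2 ⟨(mem_filter.1 hx).1, hzmax x hx⟩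
    have hzT : z ∈ T := mem_filter.2 ⟨(mem_filter.1 hz).1, by have := card_le_card hsub; omega⟩
    exact (hmin z hzT).not_gt (mem_filter.1 hz).2

lemma Fin.sum_castLE_eq_sum_filter_lt {M : Type*} [AddCommMonoid M] {k n : ℕ} (h : k ≤ n)
    (f : Fin n → M) : ∑ i : Fin k, f (Fin.castLE h i) = ∑ j : Fin n with j.val < k, f j := by
  refine (sum_map univ (Fin.castLEEmb h) f).symm.trans ?_
  congr 1
  ext j
  simp only [mem_map, mem_univ, true_and, Fin.castLEEmb_apply, mem_filter]
  exact ⟨fun ⟨i, hi⟩ => hi ▸ i.2, fun hj => ⟨⟨j, hj⟩, rfl⟩⟩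

namespace SimpleGraph

variable {V : Type*} (G : SimpleGraph V) [DecidableRel G.Adj]

noncomputable def dirichletEnergy (C : Finset V) (v : V → ℝ) : ℝ :=
  ∑ p ∈ G.interedges C C, (v p.1 - v p.2) ^ 2

def HasInnerExpansion [DecidableEq V] (C : Finset V) (φ : ℝ) (d : ℕ) : Prop :=
  ∀ S ⊆ C, S.Nonempty → 2 * #S ≤ #C → φ * d * #S ≤ #(G.interedges S (C \ S))

lemma dirichletEnergy_nonneg (C : Finset V) (v : V → ℝ) : 0 ≤ G.dirichletEnergy C v :=
  sum_nonneg fun _ _ => sq_nonneg _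

lemma sum_interedges_swap {M : Type*} [AddCommMonoid M] (s t : Finset V) (f : V × V → M) :
    ∑ p ∈ G.interedges s t, f p.swap = ∑ p ∈ G.interedges t s, f p :=
  sum_nbij' Prod.swap Prod.swap (fun _ => G.swap_mem_interedges_iff.mpr)
    (fun _ => G.swap_mem_interedges_iff.mpr) (fun _ _ => rfl) (fun _ _ => rfl) fun _ _ => rfl

lemma sum_interedges_fst_le {C : Finset V} {d : ℕ} (hdeg : ∀ x ∈ C, #{y ∈ C | G.Adj x y} ≤ d)
    {g : V → ℝ} (hg : ∀ x ∈ C, 0 ≤ g x) :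
    ∑ p ∈ G.interedges C C, g p.1 ≤ d * ∑ x ∈ C, g x := by
  rw [interedges_def, sum_filter, sum_product, mul_sum]
  refine sum_le_sum fun x hx => ?_
  dsimp only
  rw [← sum_filter, sum_const, nsmul_eq_mul]
  exact mul_le_mul_of_nonneg_right (by exact_mod_cast hdeg x hx) (hg x hx)

lemma sum_interedges_sq_indicator_sub [DecidableEq V] {C S : Finset V} (hS : S ⊆ C) :
    ∑ p ∈ G.interedges C C, ((if p.1 ∈ S then 1 else 0) - (if p.2 ∈ S then 1 else 0) : ℝ) ^ 2 =
      2 * #(G.interedges S (C \ S)) := by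
  have hsplit : ∀ p : V × V, ((if p.1 ∈ S then 1 else 0) - (if p.2 ∈ S then 1 else 0) : ℝ) ^ 2 =
      (if p.1 ∈ S ∧ p.2 ∉ S then 1 else 0) + (if p.swap.1 ∈ S ∧ p.swap.2 ∉ S then 1 else 0) := by
    intro p
    by_cases h1 : p.1 ∈ S <;> by_cases h2 : p.2 ∈ S <;> simp [h1, h2]
  have hcut : {p ∈ G.interedges C C | p.1 ∈ S ∧ p.2 ∉ S} = G.interedges S (C \ S) := by
    ext ⟨a, b⟩
    simp only [mem_filter, mk_mem_interedges_iff, mem_sdiff]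
    exact ⟨fun ⟨⟨_, hb, hab⟩, ha, hbS⟩ => ⟨ha, ⟨hb, hbS⟩, hab⟩,
      fun ⟨ha, ⟨hb, hbS⟩, hab⟩ => ⟨⟨hS ha, hb, hab⟩, ha, hbS⟩⟩
  simp_rw [hsplit, sum_add_distrib,
    G.sum_interedges_swap C C fun p => if p.1 ∈ S ∧ p.2 ∉ S then (1 : ℝ) else 0, sum_boole, hcut]
  ring

lemma dirichletEnergy_univ [Fintype V] (v : V → ℝ) :
    G.dirichletEnergy univ v = ∑ x, ∑ y, if G.Adj x y then (v x - v y) ^ 2 else 0 := by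
  rw [dirichletEnergy, interedges_def, sum_filter, sum_product]

lemma dirichletEnergy_univ_indicator [Fintype V] [DecidableEq V] (C : Finset V) :
    G.dirichletEnergy univ (fun x => if x ∈ C then 1 else 0) = 2 * #(G.interedges C Cᶜ) := by
  rw [dirichletEnergy, G.sum_interedges_sq_indicator_sub (subset_univ C), compl_eq_univ_sdiff]

lemma card_filter_adj_le [Fintype V] {C : Finset V} {d : ℕ} (hreg : G.IsRegularOfDegree d)
    (x : V) : #{y ∈ C | G.Adj x y} ≤ d := by
  rw [← hreg x, ← card_neighborFinset_eq_degree]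
  exact card_le_card fun y hy => (G.mem_neighborFinset x y).2 (mem_filter.1 hy).2

variable [DecidableEq V] {G} {C : Finset V} {φ : ℝ} {d : ℕ}

lemma sum_interedges_abs_sub_eq {S : Finset V} (hSC : S ⊆ C) {f : V → ℝ} {m : ℝ} (hm : 0 ≤ m)
    (hmin : ∀ x ∈ S, m ≤ f x) (hzero : ∀ x ∈ C, x ∉ S → f x = 0) :
    ∑ p ∈ G.interedges C C, |f p.1 - f p.2| =
      ∑ p ∈ G.interedges C C, |(f p.1 - if p.1 ∈ S then m else 0) -
        (f p.2 - if p.2 ∈ S then m else 0)| + m * (2 * #(G.interedges S (C \ S))) := by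
  rw [← G.sum_interedges_sq_indicator_sub hSC, mul_sum, ← sum_add_distrib]
  refine sum_congr rfl fun ⟨x, y⟩ hp => ?_
  obtain ⟨hx, hy, -⟩ := G.mk_mem_interedges_iff.1 hp
  by_cases hxS : x ∈ S <;> by_cases hyS : y ∈ S <;>
    simp only [hxS, hyS, if_true, if_false, hzero x hx, hzero y hy, not_false_eq_true,
      sub_zero, zero_sub, sub_self, abs_neg, neg_sub]
  · ring_nf
  · rw [abs_of_nonneg (hm.trans (hmin x hxS)), abs_of_nonneg (by linarith [hmin x hxS])]; ring
  · rw [abs_of_nonneg (hm.trans (hmin y hyS)), abs_of_nonpos (by linarith [hmin y hyS])]; ring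
  · simp

lemma HasInnerExpansion.two_mul_sum_le_sum_abs_sub (hC : G.HasInnerExpansion C φ d)
    (f : V → ℝ) (hf : ∀ x ∈ C, 0 ≤ f x) (hsupp : 2 * #{x ∈ C | f x ≠ 0} ≤ #C) :
    2 * (φ * d * ∑ x ∈ C, f x) ≤ ∑ p ∈ G.interedges C C, |f p.1 - f p.2| := by
  induction hN : #{x ∈ C | f x ≠ 0} using Nat.strong_induction_on generalizing f with
  | _ N ih =>
  set S := {x ∈ C | f x ≠ 0}
  have hSC : S ⊆ C := filter_subset _ _
  have hzero : ∀ x ∈ C, x ∉ S → f x = 0 := fun x hx hxS => by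
    by_contra h; exact hxS (mem_filter.2 ⟨hx, h⟩)
  rcases S.eq_empty_or_nonempty with hS | hS
  · rw [sum_eq_zero fun x hx => hzero x hx (by simp [hS])]
    simpa using sum_nonneg fun p (_ : p ∈ G.interedges C C) => abs_nonneg (f p.1 - f p.2)
  -- subtract the minimum `m` of `f` on its support `S`, which shrinks the support
  obtain ⟨x₀, hx₀, hmin⟩ := S.exists_min_image f hS
  have hm : 0 ≤ f x₀ := hf x₀ (hSC hx₀)
  set f' : V → ℝ := fun x => f x - if x ∈ S then f x₀ else 0
  have hf' : ∀ x ∈ C, 0 ≤ f' x := fun x hx => by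
    by_cases hxS : x ∈ S
    · simpa [f', hxS] using hmin x hxS
    · simp [f', hxS, hzero x hx hxS]
  have hsupp' : {x ∈ C | f' x ≠ 0} ⊆ S.erase x₀ := fun x hx => by
    obtain ⟨hxC, hx0⟩ := mem_filter.1 hx
    have hxS : x ∈ S := by
      by_contra hxS; simp [f', hxS, hzero x hxC hxS] at hx0
    refine mem_erase.2 ⟨fun h => ?_, hxS⟩
    subst h; simp [f', hxS] at hx0
  have hcard := card_le_card hsupp'
  rw [card_erase_of_mem hx₀] at hcard
  have ih' := ih _ (by have := card_pos.2 hS; omega) f' hf' (by omega) rfl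
  have hsum : ∑ x ∈ C, f x = ∑ x ∈ C, f' x + f x₀ * #S := by
    simp only [f', sum_sub_distrib, sum_ite_mem, inter_eq_right.2 hSC, sum_const, nsmul_eq_mul]
    ring
  rw [G.sum_interedges_abs_sub_eq hSC hm hmin hzero, hsum]
  have := hC S hSC hS (hN ▸ hsupp)
  nlinarith

lemma HasInnerExpansion.mul_sum_sq_le_dirichletEnergy_of_nonneg (hC : G.HasInnerExpansion C φ d)
    (hφ : 0 ≤ φ) (hdeg : ∀ x ∈ C, #{y ∈ C | G.Adj x y} ≤ d)
    (f : V → ℝ) (hf : ∀ x ∈ C, 0 ≤ f x) (hsupp : 2 * #{x ∈ C | f x ≠ 0} ≤ #C) :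
    φ ^ 2 * d * ∑ x ∈ C, f x ^ 2 ≤ G.dirichletEnergy C f := by
  set Q := ∑ x ∈ C, f x ^ 2
  set A := ∑ p ∈ G.interedges C C, |f p.1 ^ 2 - f p.2 ^ 2|
  set B := ∑ p ∈ G.interedges C C, (f p.1 + f p.2) ^ 2
  have hA : 2 * (φ * d * Q) ≤ A := by
    refine hC.two_mul_sum_le_sum_abs_sub _ (fun x _ => sq_nonneg _) ?_
    simpa only [ne_eq, pow_eq_zero_iff two_ne_zero] using hsupp
  have hAB : A ^ 2 ≤ G.dirichletEnergy C f * B := by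
    have hA' : A = ∑ p ∈ G.interedges C C, |f p.1 - f p.2| * (f p.1 + f p.2) := by
      refine sum_congr rfl fun p hp => ?_
      obtain ⟨h1, h2, -⟩ := G.mem_interedges_iff.1 hp
      rw [sq_sub_sq, abs_mul, abs_of_nonneg (add_nonneg (hf _ h1) (hf _ h2)), mul_comm]
    rw [hA', dirichletEnergy]
    simpa only [sq_abs] using sum_mul_sq_le_sq_mul_sq (G.interedges C C)
      (fun p => |f p.1 - f p.2|) fun p => f p.1 + f p.2
  have hB : B ≤ 4 * d * Q := by
    have hfst := G.sum_interedges_fst_le hdeg (g := fun x => f x ^ 2) fun x _ => sq_nonneg _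
    have hsnd := G.sum_interedges_swap C C fun p => f p.1 ^ 2
    simp only [Prod.fst_swap] at hsnd
    calc B ≤ ∑ p ∈ G.interedges C C, (2 * f p.1 ^ 2 + 2 * f p.2 ^ 2) :=
          sum_le_sum fun p _ => by nlinarith [sq_nonneg (f p.1 - f p.2)]
      _ ≤ 4 * d * Q := by
          rw [sum_add_distrib, ← mul_sum, ← mul_sum, hsnd]
          linarith
  rcases (show 0 ≤ (d : ℝ) * Q by positivity).eq_or_lt with hQ0 | hQpos
  · rw [mul_assoc, ← hQ0, mul_zero]
    exact G.dirichletEnergy_nonneg C f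
  · have hsq : (2 * (φ * d * Q)) ^ 2 ≤ A ^ 2 := pow_le_pow_left₀ (by positivity) hA 2
    nlinarith [G.dirichletEnergy_nonneg C f]

lemma HasInnerExpansion.mul_sum_sq_le_dirichletEnergy (hC : G.HasInnerExpansion C φ d)
    (hφ : 0 ≤ φ) (hdeg : ∀ x ∈ C, #{y ∈ C | G.Adj x y} ≤ d) (v : V → ℝ)
    (hv : ∑ x ∈ C, v x = 0) :
    φ ^ 2 * d * ∑ x ∈ C, v x ^ 2 ≤ G.dirichletEnergy C v := by
  obtain ⟨c, hgt, hlt⟩ := C.exists_median v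
  have hpos := hC.mul_sum_sq_le_dirichletEnergy_of_nonneg hφ hdeg (fun x => (v x - c)⁺)
    (fun x _ => posPart_nonneg _) (by simpa [posPart_eq_zero] using hgt)
  have hneg := hC.mul_sum_sq_le_dirichletEnergy_of_nonneg hφ hdeg (fun x => (v x - c)⁻)
    (fun x _ => negPart_nonneg _) (by simpa [negPart_eq_zero] using hlt)
  have hsq : ∑ x ∈ C, v x ^ 2 ≤ ∑ x ∈ C, (v x - c)⁺ ^ 2 + ∑ x ∈ C, (v x - c)⁻ ^ 2 := by
    rw [← sum_add_distrib]
    simp only [posPart_sq_add_negPart_sq, sub_sq, sum_add_distrib, sum_sub_distrib, ← sum_mul,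
      ← mul_sum, hv, sum_const, nsmul_eq_mul]
    nlinarith [sq_nonneg c, Nat.cast_nonneg (α := ℝ) #C]
  have henergy : G.dirichletEnergy C (fun x => (v x - c)⁺) +
      G.dirichletEnergy C (fun x => (v x - c)⁻) ≤ G.dirichletEnergy C v := by
    rw [dirichletEnergy, dirichletEnergy, dirichletEnergy, ← sum_add_distrib]
    refine sum_le_sum fun p _ => ?_
    simpa using sq_posPart_sub_add_sq_negPart_sub_le (v p.1 - c) (v p.2 - c)
  have : 0 ≤ φ ^ 2 * d := by positivity
  nlinarith

end SimpleGraph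

section Spectral

variable {ι : Type*} [Fintype ι] [DecidableEq ι] {L : Matrix ι ι ℝ} {u : ι → ι → ℝ}
  {lam : ι → ℝ}

lemma transpose_mulVec_mulVec_of_orthonormal
    (horth : ∀ i j, u i ⬝ᵥ u j = if i = j then 1 else 0) (w : ι → ℝ) :
    (of u)ᵀ *ᵥ (of u *ᵥ w) = w := by
  have h : of u * (of u)ᵀ = 1 := by
    ext i j
    simpa [mul_apply, one_apply, dotProduct] using horth i j
  rw [mulVec_mulVec, mul_eq_one_comm.1 h, one_mulVec]

lemma dotProduct_mulVec_eq_sum_eigenvalue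
    (horth : ∀ i j, u i ⬝ᵥ u j = if i = j then 1 else 0)
    (heig : ∀ i, L *ᵥ u i = lam i • u i) (w : ι → ℝ) :
    w ⬝ᵥ (L *ᵥ w) = ∑ j, lam j * (u j ⬝ᵥ w) ^ 2 := by
  have hLU : L * (of u)ᵀ = (of u)ᵀ * diagonal lam := by
    ext x j
    have := congrFun (heig j) x
    simp only [mulVec, dotProduct, Pi.smul_apply, smul_eq_mul] at this
    rw [mul_diagonal, mul_apply]
    simpa [mul_comm] using this
  set s := of u *ᵥ w
  have hw : (of u)ᵀ *ᵥ s = w := transpose_mulVec_mulVec_of_orthonormal horth w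
  calc w ⬝ᵥ (L *ᵥ w) = w ⬝ᵥ ((of u)ᵀ *ᵥ (diagonal lam *ᵥ s)) := by
        rw [mulVec_mulVec, ← hLU, ← mulVec_mulVec, hw]
    _ = s ⬝ᵥ (diagonal lam *ᵥ s) := by rw [dotProduct_mulVec, vecMul_transpose]
    _ = ∑ j, lam j * (u j ⬝ᵥ w) ^ 2 := by
        simp only [dotProduct, mulVec_diagonal, s]
        exact sum_congr rfl fun j _ => by simp [mulVec, dotProduct]; ring

lemma dotProduct_self_eq_sum_sq (horth : ∀ i j, u i ⬝ᵥ u j = if i = j then 1 else 0)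
    (w : ι → ℝ) : w ⬝ᵥ w = ∑ j, (u j ⬝ᵥ w) ^ 2 := by
  simpa using dotProduct_mulVec_eq_sum_eigenvalue (L := 1) (lam := 1) horth (by simp) w

lemma dotProduct_ite_mem (v : ι → ℝ) (C : Finset ι) :
    v ⬝ᵥ (fun x => if x ∈ C then 1 else 0) = ∑ x ∈ C, v x := by
  simp [dotProduct, mul_ite, sum_ite_mem]

end Spectral

lemma le_eigenvalue_of_forall_orthogonal {n k : ℕ} {L : Matrix (Fin n) (Fin n) ℝ}
    {u : Fin n → Fin n → ℝ} {lam : Fin n → ℝ}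
    (horth : ∀ i j, u i ⬝ᵥ u j = if i = j then 1 else 0)
    (heig : ∀ i, L *ᵥ u i = lam i • u i) (hmono : Monotone lam)
    (w : Fin k → Fin n → ℝ) {c : ℝ}
    (hc : ∀ v, (∀ i, w i ⬝ᵥ v = 0) → c * (v ⬝ᵥ v) ≤ v ⬝ᵥ (L *ᵥ v)) (hk : k < n) :
    c ≤ lam ⟨k, hk⟩ := by
  -- a nonzero combination `v` of `u 0, …, u k` orthogonal to every `w i`
  let e : Fin (k + 1) → Fin n := Fin.castLE hk
  obtain ⟨β, hβker, hβ0⟩ := Submodule.exists_mem_ne_zero_of_ne_bot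
    (LinearMap.ker_ne_bot_of_finrank_lt (f := (of fun i j => w i ⬝ᵥ u (e j)).mulVecLin)
      (by simp))
  set v := ∑ j, β j • u (e j)
  have hcoef : ∀ l, u l ⬝ᵥ v = ∑ j, if e j = l then β j else 0 := fun l => by
    simp only [v, dotProduct_sum, dotProduct_smul, horth, smul_eq_mul, mul_ite, mul_one,
      mul_zero, eq_comm]
  have hv : ∀ i, w i ⬝ᵥ v = 0 := fun i => by
    simp only [v, dotProduct_sum, dotProduct_smul, smul_eq_mul, mul_comm (β _)]
    exact congrFun (LinearMap.mem_ker.1 hβker) i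
  obtain ⟨j₀, hj₀⟩ : ∃ j, β j ≠ 0 := Function.ne_iff.1 hβ0
  have hpos : 0 < v ⬝ᵥ v := by
    rw [dotProduct_self_eq_sum_sq horth]
    refine sum_pos' (fun _ _ => sq_nonneg _) ⟨e j₀, mem_univ _, ?_⟩
    rw [hcoef, sum_eq_single j₀ (fun j _ hj => if_neg ((Fin.castLE_injective hk).ne hj))
      (by simp), if_pos rfl]
    positivity
  have hle : v ⬝ᵥ (L *ᵥ v) ≤ lam ⟨k, hk⟩ * (v ⬝ᵥ v) := by
    rw [dotProduct_mulVec_eq_sum_eigenvalue horth heig, dotProduct_self_eq_sum_sq horth, mul_sum]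
    refine sum_le_sum fun l _ => ?_
    rcases le_or_gt (l : ℕ) k with hl | hl
    · exact mul_le_mul_of_nonneg_right (hmono (Fin.le_def.2 hl)) (sq_nonneg _)
    · have : u l ⬝ᵥ v = 0 := by
        rw [hcoef]
        exact sum_eq_zero fun j _ => if_neg fun h => by
          have := congrArg Fin.val h; simp [e] at this; omega
      simp [this]
  exact le_of_mul_le_mul_right ((hc v hv).trans hle) hpos

lemma dotProduct_normLap_mulVec {n d : ℕ} {G : SimpleGraph (Fin n)} [DecidableRel G.Adj]
    (hd : d ≠ 0) (hreg : G.IsRegularOfDegree d) (v : Fin n → ℝ) :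
    v ⬝ᵥ (normLap G d *ᵥ v) = G.dirichletEnergy univ v / (2 * d) := by
  have hL : normLap G d = (d : ℝ)⁻¹ • G.lapMatrix ℝ := by
    have : G.degMatrix ℝ = (d : ℝ) • 1 := by
      ext i j; simp [SimpleGraph.degMatrix, hreg i, diagonal_apply, one_apply]
    rw [normLap, SimpleGraph.lapMatrix, this, smul_sub, smul_smul,
      inv_mul_cancel₀ (Nat.cast_ne_zero.2 hd), one_smul]
  rw [hL, smul_mulVec, dotProduct_smul, ← toLinearMap₂'_apply', G.lapMatrix_toLinearMap₂' ℝ,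
    G.dirichletEnergy_univ, smul_eq_mul]
  ring

lemma hasInnerExpansion_of_le_phiIn {n d : ℕ} {G : SimpleGraph (Fin n)} [DecidableRel G.Adj]
    {φ : ℝ} {C : Finset (Fin n)} (h : φ ≤ phiIn G d C) : G.HasInnerExpansion C φ d := by
  intro S hSC hS h2
  have hS0 := card_pos.2 hS
  rw [phiIn, if_pos (by omega)] at h
  have hle := h.trans (csInf_le ⟨0, ?_⟩ ⟨S, hSC, hS0, h2, rfl⟩)
  · rw [mul_assoc]
    exact mul_le_of_le_div₀ (Nat.cast_nonneg _) (by positivity) hle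
  · rintro _ ⟨T, -, -, -, rfl⟩
    positivity

lemma card_interedges_compl_div_le_of_phiOut_le {n d : ℕ} {G : SimpleGraph (Fin n)}
    [DecidableRel G.Adj] {ε : ℝ} {C : Finset (Fin n)} (h : phiOut G d C ≤ ε) (hd : d ≠ 0) :
    (#(G.interedges C Cᶜ) : ℝ) / d ≤ ε * #C := by
  rcases C.eq_empty_or_nonempty with rfl | hC
  · simp
  rw [phiOut, div_le_iff₀ (by positivity)] at h
  rw [div_le_iff₀ (by positivity)]
  exact h.trans_eq (by ring)

namespace IsSpectralBasis

variable {n d : ℕ} {G : SimpleGraph (Fin n)} [DecidableRel G.Adj] {u : Fin n → Fin n → ℝ}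
  {lam : Fin n → ℝ}

lemma eigenvalue_nonneg (hu : IsSpectralBasis G d u lam) (hd : d ≠ 0)
    (hreg : G.IsRegularOfDegree d) (j : Fin n) : 0 ≤ lam j := by
  have hunit : u j ⬝ᵥ u j = 1 := (hu.1 j j).trans (if_pos rfl)
  have := dotProduct_normLap_mulVec hd hreg (u j)
  rw [hu.2.1 j, dotProduct_smul, hunit, smul_eq_mul, mul_one] at this
  rw [this]
  exact div_nonneg (G.dirichletEnergy_nonneg _ _) (by positivity)

lemma sum_sq_sum_eq_card (hu : IsSpectralBasis G d u lam) (C : Finset (Fin n)) :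
    ∑ j, (∑ x ∈ C, u j x) ^ 2 = #C := by
  have := dotProduct_self_eq_sum_sq hu.1 (fun x => if x ∈ C then (1 : ℝ) else 0)
  simp only [dotProduct_ite_mem] at this
  rw [← this]
  simp [sum_ite_mem]

lemma sum_eigenvalue_mul_sq_sum_eq (hu : IsSpectralBasis G d u lam) (hd : d ≠ 0)
    (hreg : G.IsRegularOfDegree d) (C : Finset (Fin n)) :
    ∑ j, lam j * (∑ x ∈ C, u j x) ^ 2 = #(G.interedges C Cᶜ) / d := by
  have := dotProduct_mulVec_eq_sum_eigenvalue hu.1 hu.2.1 fun x => if x ∈ C then (1 : ℝ) else 0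
  simp only [dotProduct_ite_mem] at this
  rw [← this, dotProduct_normLap_mulVec hd hreg, G.dirichletEnergy_univ_indicator]
  field_simp

end IsSpectralBasis

namespace IsClustering

variable {n d k : ℕ} {G : SimpleGraph (Fin n)} [DecidableRel G.Adj] {φ ε : ℝ}
  {C : Fin k → Finset (Fin n)}

lemma sum_eq_sum_sum (hC : IsClustering G d k φ ε C) {M : Type*} [AddCommMonoid M]
    (g : Fin n → M) : ∑ x, g x = ∑ i, ∑ x ∈ C i, g x := by
  rw [← sum_biUnion fun i _ j _ hij => hC.1 i j hij]
  congr 1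
  ext x
  simpa using hC.2.1 x

lemma sum_dirichletEnergy_le (hC : IsClustering G d k φ ε C) (v : Fin n → ℝ) :
    ∑ i, G.dirichletEnergy (C i) v ≤ G.dirichletEnergy univ v := by
  simp only [SimpleGraph.dirichletEnergy]
  rw [← sum_biUnion (t := fun i => G.interedges (C i) (C i)) fun i _ j _ hij =>
    (G.interedges_disjoint_left (hC.1 i j hij) univ).mono
      (G.interedges_mono subset_rfl (subset_univ _)) (G.interedges_mono subset_rfl (subset_univ _))]
  exact sum_le_sum_of_subset_of_nonneg
    (biUnion_subset.2 fun i _ => G.interedges_mono (subset_univ _) (subset_univ _))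
    fun _ _ _ => sq_nonneg _

lemma mul_sum_sq_le_dirichletEnergy (hC : IsClustering G d k φ ε C) (hφ : 0 ≤ φ)
    (hreg : G.IsRegularOfDegree d) (v : Fin n → ℝ) (hv : ∀ i, ∑ x ∈ C i, v x = 0) :
    φ ^ 2 * d * ∑ x, v x ^ 2 ≤ G.dirichletEnergy univ v := by
  rw [hC.sum_eq_sum_sum, mul_sum]
  exact (sum_le_sum fun i _ =>
    (hasInnerExpansion_of_le_phiIn (hC.2.2.1 i)).mul_sum_sq_le_dirichletEnergy hφ
      (fun x _ => G.card_filter_adj_le hreg x) v (hv i)).trans (hC.sum_dirichletEnergy_le v)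

lemma sq_div_two_le_eigenvalue (hC : IsClustering G d k φ ε C) (hφ : 0 ≤ φ) (hd : d ≠ 0)
    (hreg : G.IsRegularOfDegree d) {u : Fin n → Fin n → ℝ} {lam : Fin n → ℝ}
    (hu : IsSpectralBasis G d u lam) (hk : k < n) : φ ^ 2 / 2 ≤ lam ⟨k, hk⟩ := by
  refine le_eigenvalue_of_forall_orthogonal hu.1 hu.2.1 hu.2.2
    (fun i x => if x ∈ C i then 1 else 0) (fun v hv => ?_) hk
  have hv' : ∀ i, ∑ x ∈ C i, v x = 0 := fun i => by
    rw [← dotProduct_ite_mem, dotProduct_comm]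
    exact hv i
  have := hC.mul_sum_sq_le_dirichletEnergy hφ hreg v hv'
  rw [dotProduct_normLap_mulVec hd hreg, le_div_iff₀ (by positivity)]
  simp only [dotProduct, ← sq]
  linarith

lemma sq_div_two_mul_sum_tail_le (hC : IsClustering G d k φ ε C) (hφ : 0 ≤ φ) (hd : d ≠ 0)
    (hreg : G.IsRegularOfDegree d) {u : Fin n → Fin n → ℝ} {lam : Fin n → ℝ}
    (hu : IsSpectralBasis G d u lam) (i : Fin k) :
    φ ^ 2 / 2 * ∑ j with ¬ j.val < k, (∑ x ∈ C i, u j x) ^ 2 ≤ ε * #(C i) := by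
  calc φ ^ 2 / 2 * ∑ j with ¬ j.val < k, (∑ x ∈ C i, u j x) ^ 2
      = ∑ j with ¬ j.val < k, φ ^ 2 / 2 * (∑ x ∈ C i, u j x) ^ 2 := mul_sum _ _ _
    _ ≤ ∑ j with ¬ j.val < k, lam j * (∑ x ∈ C i, u j x) ^ 2 := by
        refine sum_le_sum fun j hj => mul_le_mul_of_nonneg_right ?_ (sq_nonneg _)
        have hjk := not_lt.1 (mem_filter.1 hj).2
        exact (hC.sq_div_two_le_eigenvalue hφ hd hreg hu (hjk.trans_lt j.2)).trans
          (hu.2.2 (Fin.le_def.2 hjk))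
    _ ≤ ∑ j, lam j * (∑ x ∈ C i, u j x) ^ 2 :=
        sum_le_sum_of_subset_of_nonneg (filter_subset _ _) fun j _ _ =>
          mul_nonneg (hu.eigenvalue_nonneg hd hreg j) (sq_nonneg _)
    _ = #(G.interedges (C i) (C i)ᶜ) / d := hu.sum_eigenvalue_mul_sq_sum_eq hd hreg (C i)
    _ ≤ ε * #(C i) := card_interedges_compl_div_le_of_phiOut_le (hC.2.2.2 i) hd

end IsClustering

lemma abs_inv_sq_mul_sub_sub_inv_le {N T φ ε : ℝ} (hT : 0 ≤ T) (hTN : T ≤ N) (hφ : 0 < φ)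
    (hε : 0 ≤ ε) (htail : φ ^ 2 / 2 * T ≤ ε * N) :
    |N⁻¹ ^ 2 * (N - T) - 1 / N| ≤ 4 * √ε / φ * (1 / N) := by
  have hN := hT.trans hTN
  have hTle : T ≤ 4 * √ε / φ * N := by
    rcases le_or_gt φ (4 * √ε) with h | h
    · exact hTN.trans (le_mul_of_one_le_left hN ((one_le_div hφ).2 h))
    · have h1 : T * φ * φ ≤ √ε * N / 2 * φ := by
        nlinarith [sq_sqrt hε, mul_le_mul_of_nonneg_left h.le (mul_nonneg (sqrt_nonneg ε) hN)]
      rw [div_mul_eq_mul_div, le_div_iff₀ hφ]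
      nlinarith [le_of_mul_le_mul_right h1 hφ, mul_nonneg (sqrt_nonneg ε) hN]
  rcases hN.eq_or_lt with rfl | hN
  · simp
  have : N⁻¹ ^ 2 * (N - T) - 1 / N = -(T / N ^ 2) := by field_simp; ring
  rw [this, abs_neg, abs_of_nonneg (by positivity), div_le_iff₀ (by positivity)]
  calc T ≤ 4 * √ε / φ * N := hTle
    _ = 4 * √ε / φ * (1 / N) * N ^ 2 := by field_simp

lemma norm_center_spectralEmbedding_sq {n k : ℕ} (u : Fin n → Fin n → ℝ) (hkn : k ≤ n)
    (C : Finset (Fin n)) :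
    ‖center (spectralEmbedding u hkn) C‖ ^ 2 =
      (#C : ℝ)⁻¹ ^ 2 * ∑ i : Fin k, (∑ x ∈ C, u (Fin.castLE hkn i) x) ^ 2 := by
  rw [center, norm_smul, mul_pow, EuclideanSpace.real_norm_sq_eq, norm_inv, Real.norm_natCast]
  simp only [WithLp.ofLp_sum, Finset.sum_apply]
  rfl

theorem statement_6_general {n d k : ℕ} (hd : 3 ≤ d) (hkn : k ≤ n)
    {φ ε : ℝ} (hφ : φ ∈ Set.Ioo (0:ℝ) 1) (hε : ε ∈ Set.Ioo (0:ℝ) 1)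
    (G : SimpleGraph (Fin n)) [DecidableRel G.Adj] (hreg : G.IsRegularOfDegree d)
    (C : Fin k → Finset (Fin n)) (hC : IsClustering G d k φ ε C)
    (u : Fin n → Fin n → ℝ) (lam : Fin n → ℝ) (hu : IsSpectralBasis G d u lam) :
    ∀ i : Fin k,
      |‖center (spectralEmbedding u hkn) (C i)‖ ^ 2 - 1 / ((C i).card : ℝ)| ≤
        (4 * Real.sqrt ε / φ) * (1 / ((C i).card : ℝ)) := by
  intro i
  have hsplit := sum_filter_add_sum_filter_not univ (fun j : Fin n => j.val < k)
    fun j => (∑ x ∈ C i, u j x) ^ 2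
  rw [hu.sum_sq_sum_eq_card] at hsplit
  rw [norm_center_spectralEmbedding_sq,
    Fin.sum_castLE_eq_sum_filter_lt hkn fun j => (∑ x ∈ C i, u j x) ^ 2, eq_sub_of_add_eq hsplit]
  exact abs_inv_sq_mul_sub_sub_inv_le (sum_nonneg fun _ _ => sq_nonneg _)
    ((le_add_of_nonneg_left (sum_nonneg fun _ _ => sq_nonneg _)).trans_eq hsplit) hφ.1 hε.1.le
    (hC.sq_div_two_mul_sum_tail_le hφ.1.le (by omega) hreg hu i)

/-- Lemma 7(1) of Gluch et al.. For a `d`-regular graph admitting a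
`(k,φ,ε)`-clustering `C_1,…,C_k`, every cluster center satisfies
`| ‖μ_i‖₂² - 1/|C_i| | ≤ (4√ε/φ)·(1/|C_i|)`. -/
theorem statement_6 {n d k : ℕ} (hd : 3 ≤ d) (hk : 2 ≤ k) (hkn : k ≤ n)
    {φ ε : ℝ} (hφ : φ ∈ Set.Ioo (0:ℝ) 1) (hε : ε ∈ Set.Ioo (0:ℝ) 1)
    (G : SimpleGraph (Fin n)) [DecidableRel G.Adj] (hreg : G.IsRegularOfDegree d)
    (C : Fin k → Finset (Fin n)) (hC : IsClustering G d k φ ε C)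
    (u : Fin n → Fin n → ℝ) (lam : Fin n → ℝ) (hu : IsSpectralBasis G d u lam) :
    ∀ i : Fin k,
      |‖center (spectralEmbedding u hkn) (C i)‖ ^ 2 - 1 / ((C i).card : ℝ)| ≤
        (4 * Real.sqrt ε / φ) * (1 / ((C i).card : ℝ)) :=
  statement_6_general hd hkn hφ hε G hreg C hC u lam hu
end

section
/- Let k ≥ 2 be an integer, φ ∈ (0,1), ε ∈ (0,1), and let c be an integer with 0 ≤ c ≤ dφ²/(2√10). Let G₀ = (V,E₀) be a d-regular n-vertex graph that admits a (k,φ,ε)-clustering C_1,…,C_k. Let G be a graph obtained from G₀ by deleting, for each i ∈ [k], at most c edges whose both endpoints lie in C_i (and no other edges). Then C_1,…,C_k is a (k, φ²/8, ε)-clustering of G, where conductances in the d-bounded graph G are computed with denominators d|S| and d|C| as in the d-regular convention; in particular, φ_in(C_i) ≥ φ²/8 and φ_out(C_i,V) ≤ ε in G for every i ∈ [k]. -/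
open Finset Matrix Real
open scoped RealInnerProductSpace

/-!
Deleting edges can only lower the cut counts, which settles the outer conductance. For the inner
conductance, a cut `(S, C ∖ S)` inside a cluster loses at most the `c` edges deleted inside that
cluster, so its ratio drops by at most `c / (d |S|) ≤ c / d`; the bound on `c` makes
`φ - c / d ≥ φ² / 8`.
-/

section

variable {n : ℕ} {G G₀ : SimpleGraph (Fin n)} [DecidableRel G.Adj] [DecidableRel G₀.Adj]

lemma edgesBetween_mono (h : G ≤ G₀) (S T : Finset (Fin n)) :
    edgesBetween G S T ≤ edgesBetween G₀ S T :=
  card_le_card <| monotone_filter_right _ fun _ _ hp => h hp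

lemma phiOut_mono (h : G ≤ G₀) (d : ℕ) (C : Finset (Fin n)) :
    phiOut G d C ≤ phiOut G₀ d C :=
  div_le_div_of_nonneg_right (by exact_mod_cast edgesBetween_mono h C Cᶜ) (by positivity)

open Classical in
lemma edgesBetween_le_add_card_deleted {S C : Finset (Fin n)} (hS : S ⊆ C) :
    edgesBetween G₀ S (C \ S) ≤ edgesBetween G S (C \ S) +
      ((G₀.edgeFinset \ G.edgeFinset).filter fun e => ∀ v ∈ e, v ∈ C).card := by
  set P := S ×ˢ (C \ S)
  have hsplit : edgesBetween G₀ S (C \ S) ≤ edgesBetween G S (C \ S) +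
      (P.filter fun p => G₀.Adj p.1 p.2 ∧ ¬ G.Adj p.1 p.2).card :=
    calc edgesBetween G₀ S (C \ S)
        ≤ (P.filter fun p => G.Adj p.1 p.2 ∨ (G₀.Adj p.1 p.2 ∧ ¬ G.Adj p.1 p.2)).card :=
          card_le_card <| monotone_filter_right _ fun _ _ => by tauto
      _ ≤ _ := by rw [filter_or]; exact card_union_le _ _
  refine hsplit.trans (Nat.add_le_add_left (card_le_card_of_injOn (fun p => s(p.1, p.2)) ?_ ?_) _)
  · rintro ⟨x, y⟩ hp
    simp only [coe_filter, Set.mem_ofPred_eq, P, mem_product, mem_sdiff] at hp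
    obtain ⟨⟨hx, hyC, -⟩, hadj₀, hadj⟩ := hp
    simp only [coe_filter, Set.mem_ofPred_eq, mem_sdiff, SimpleGraph.mem_edgeFinset,
      SimpleGraph.mem_edgeSet, Sym2.forall_mem_pair]
    exact ⟨⟨hadj₀, hadj⟩, hS hx, hyC⟩
  · rintro ⟨x, y⟩ hp ⟨x', y'⟩ hq hpq
    simp only [coe_filter, Set.mem_ofPred_eq, P, mem_product, mem_sdiff] at hp hq
    rcases Sym2.eq_iff.mp hpq with ⟨rfl, rfl⟩ | ⟨rfl, rfl⟩
    · rfl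
    · exact absurd hp.1.1 hq.1.2.2

lemma le_phiIn_iff (d : ℕ) {C : Finset (Fin n)} (hC : 1 < C.card) {φ : ℝ} :
    φ ≤ phiIn G d C ↔ ∀ S ⊆ C, 0 < S.card → 2 * S.card ≤ C.card →
      φ ≤ (edgesBetween G S (C \ S) : ℝ) / (d * S.card) := by
  obtain ⟨x, hx⟩ := card_pos.mp (zero_lt_one.trans hC)
  rw [phiIn, if_pos hC, le_csInf_iff]
  · simp only [Set.mem_ofPred_eq, forall_exists_index, and_imp]
    exact ⟨fun h S hS hS0 hS2 => h _ S hS hS0 hS2 rfl,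
      fun h _ S hS hS0 hS2 hr => hr ▸ h S hS hS0 hS2⟩
  · exact ⟨0, by rintro r ⟨S, -, -, -, rfl⟩; positivity⟩
  · exact ⟨_, {x}, singleton_subset_iff.mpr hx, by simp, by simp; omega, rfl⟩

open Classical in
lemma sub_div_le_phiIn_of_card_deleted_le {d : ℕ} {C : Finset (Fin n)} {φ : ℝ}
    (hφ : φ ≤ phiIn G₀ d C) {c : ℕ}
    (hc : ((G₀.edgeFinset \ G.edgeFinset).filter fun e => ∀ v ∈ e, v ∈ C).card ≤ c) :
    φ - c / d ≤ phiIn G d C := by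
  by_cases hC : 1 < C.card
  · rw [le_phiIn_iff d hC] at hφ ⊢
    intro S hS hS0 hS2
    have hcut : (edgesBetween G₀ S (C \ S) : ℝ) - c ≤ edgesBetween G S (C \ S) := by
      have := (edgesBetween_le_add_card_deleted hS).trans (Nat.add_le_add_left hc _)
      rw [sub_le_iff_le_add]
      exact_mod_cast this
    have hS1 : (1 : ℝ) ≤ S.card := by exact_mod_cast hS0
    calc φ - c / d
        ≤ edgesBetween G₀ S (C \ S) / (d * S.card) - c / d / S.card :=
          sub_le_sub (hφ S hS hS0 hS2) (div_le_self (by positivity) hS1)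
      _ = (edgesBetween G₀ S (C \ S) - c) / (d * S.card) := by rw [div_div, sub_div]
      _ ≤ edgesBetween G S (C \ S) / (d * S.card) :=
          div_le_div_of_nonneg_right hcut (by positivity)
  · rw [phiIn, if_neg hC] at hφ ⊢
    linarith [show (0 : ℝ) ≤ c / d by positivity]

end

open Classical in
theorem statement_14_general {n d k : ℕ}
    {φ ε : ℝ} (hφ : φ ∈ Set.Ioo (0:ℝ) 1)
    (c : ℕ) (hc : (c : ℝ) ≤ d * φ ^ 2 / (2 * Real.sqrt 10))
    (G₀ G : SimpleGraph (Fin n)) [DecidableRel G₀.Adj] [DecidableRel G.Adj]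
    (C : Fin k → Finset (Fin n)) (hC : IsClustering G₀ d k φ ε C)
    (hsub : G ≤ G₀)
    (hcount : ∀ i,
      ((G₀.edgeFinset \ G.edgeFinset).filter fun e => ∀ v ∈ e, v ∈ C i).card ≤ c) :
    IsClustering G d k (φ ^ 2 / 8) ε C := by
  obtain ⟨hdisj, hcov, hin, hout⟩ := hC
  obtain ⟨hφ0, hφ1⟩ := hφ
  have hcd : (c : ℝ) / d ≤ φ ^ 2 / 2 := by
    have h10 : (2 : ℝ) ≤ 2 * Real.sqrt 10 := by
      linarith [Real.one_le_sqrt.mpr (by norm_num : (1 : ℝ) ≤ 10)]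
    refine div_le_of_le_mul₀ (by positivity) (by positivity) ?_
    calc (c : ℝ) ≤ d * φ ^ 2 / (2 * Real.sqrt 10) := hc
      _ ≤ d * φ ^ 2 / 2 := div_le_div_of_nonneg_left (by positivity) two_pos h10
      _ = φ ^ 2 / 2 * d := by ring
  refine ⟨hdisj, hcov, fun i => ?_, fun i => (phiOut_mono hsub d (C i)).trans (hout i)⟩
  calc φ ^ 2 / 8 ≤ φ - c / d := by nlinarith
    _ ≤ phiIn G d (C i) := sub_div_le_phiIn_of_card_deleted_le (hin i) (hcount i)

open Classical in
/-- Let `0 ≤ c ≤ dφ²/(2√10)` and let `G₀` be a `d`-regular `n`-vertex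
graph admitting a `(k,φ,ε)`-clustering `C_1,…,C_k`. If `G` is obtained from `G₀` by
deleting, for each `i`, at most `c` edges with both endpoints in `C_i` (and no other
edges), then `C_1,…,C_k` is a `(k, φ²/8, ε)`-clustering of `G` (conductances in the
`d`-bounded graph `G` being computed with denominators `d|S|`, `d|C|`). -/
theorem statement_14 {n d k : ℕ} (hd : 3 ≤ d) (hk : 2 ≤ k)
    {φ ε : ℝ} (hφ : φ ∈ Set.Ioo (0:ℝ) 1) (hε : ε ∈ Set.Ioo (0:ℝ) 1)
    (c : ℕ) (hc : (c : ℝ) ≤ d * φ ^ 2 / (2 * Real.sqrt 10))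
    (G₀ G : SimpleGraph (Fin n)) [DecidableRel G₀.Adj] [DecidableRel G.Adj]
    (hreg : G₀.IsRegularOfDegree d)
    (C : Fin k → Finset (Fin n)) (hC : IsClustering G₀ d k φ ε C)
    (hsub : G ≤ G₀)
    (hdel : ∀ x y, G₀.Adj x y → ¬ G.Adj x y → ∃ i, x ∈ C i ∧ y ∈ C i)
    (hcount : ∀ i,
      ((G₀.edgeFinset \ G.edgeFinset).filter fun e => ∀ v ∈ e, v ∈ C i).card ≤ c) :
    IsClustering G d k (φ ^ 2 / 8) ε C :=
  statement_14_general hφ c hc G₀ G C hC hsub hcount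
end
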